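/- If Δ^α is Cohen–Macaulay over a field K for some α ∈ ℕ^n with positive entries, then Δ is Cohen–Macaulay over K. -/

import Mathlib

open Finset

/-- An abstract simplicial complex on vertex type `V`: a downward closed
family of finite subsets of `V`. -/
structure AbstractComplex (V : Type*) where
  faces : Set (Finset V)
  down_closed : ∀ {s t : Finset V}, s ∈ faces → t ⊆ s → t ∈ faces

namespace AbstractComplex

variable {V : Type*}

/-- A facet is a maximal face. -/
def IsFacet (Δ : AbstractComplex V) (s : Finset V) : Prop :=
  s ∈ Δ.faces ∧ ∀ t ∈ Δ.faces, s ⊆ t → s = t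

/-- A complex is pure if all facets have the same cardinality. -/
def IsPure (Δ : AbstractComplex V) : Prop :=
  ∀ s t : Finset V, Δ.IsFacet s → Δ.IsFacet t → s.card = t.card

/-- The link of a (potential) face `F`. -/
def link [DecidableEq V] (Δ : AbstractComplex V) (F : Finset V) : AbstractComplex V where
  faces := {G | G ∩ F = ∅ ∧ G ∪ F ∈ Δ.faces}
  down_closed := by
    rintro s t ⟨h1, h2⟩ hts
    refine ⟨subset_empty.mp ?_, Δ.down_closed h2 (union_subset_union hts subset_rfl)⟩
    exact h1 ▸ inter_subset_inter hts subset_rfl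

/-- The faces of cardinality `q` (i.e. dimension `q - 1`). -/
abbrev Face (Δ : AbstractComplex V) (q : ℕ) := {s : Finset V // s ∈ Δ.faces ∧ s.card = q}

/-- The simplicial boundary map on reduced chains with coefficients in `K`,
from chains spanned by faces of cardinality `q+1` to those spanned by faces of
cardinality `q`. -/
noncomputable def boundary (K : Type*) [Field K] [LinearOrder V]
    (Δ : AbstractComplex V) (q : ℕ) :
    (Δ.Face (q + 1) →₀ K) →ₗ[K] (Δ.Face q →₀ K) :=
  Finsupp.lsum K fun s => LinearMap.toSpanSingleton K _
    (∑ x ∈ s.1.attach,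
      ((-1 : K) ^ (s.1.filter (fun y => y < x.1)).card) •
        Finsupp.single (⟨s.1.erase x.1,
          Δ.down_closed s.2.1 (erase_subset _ _), by
            rw [card_erase_of_mem x.2, s.2.2]; omega⟩ : Δ.Face q) (1 : K))

/-- `Δ.RHTriv K i` says that the `i`-th reduced simplicial homology of `Δ`
with coefficients in `K` vanishes. -/
def RHTriv (K : Type*) [Field K] [LinearOrder V] (Δ : AbstractComplex V) : ℤ → Prop
  | Int.ofNat i =>
      LinearMap.ker (Δ.boundary K i) ≤ LinearMap.range (Δ.boundary K (i + 1))
  | Int.negSucc 0 => ⊤ ≤ LinearMap.range (Δ.boundary K 0)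
  | Int.negSucc (_ + 1) => True

/-- `Δ.dimLT i` means `i < dim Δ`. -/
def dimLT (Δ : AbstractComplex V) (i : ℤ) : Prop :=
  ∃ s ∈ Δ.faces, i + 2 ≤ (s.card : ℤ)

/-- Cohen–Macaulayness over `K`, via Reisner's criterion. -/
def IsCM (K : Type*) [Field K] [LinearOrder V] (Δ : AbstractComplex V) : Prop :=
  ∀ F ∈ Δ.faces, ∀ i : ℤ, (Δ.link F).dimLT i → (Δ.link F).RHTriv K i

/-- `CM_t`: pure, and the link of every face of cardinality at least `t`
is Cohen–Macaulay. -/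
def IsCMt (K : Type*) [Field K] [LinearOrder V] (t : ℕ) (Δ : AbstractComplex V) : Prop :=
  Δ.IsPure ∧ ∀ F ∈ Δ.faces, t ≤ F.card → IsCM K (Δ.link F)

/-- Buchsbaum-ness: pure and the reduced homology of the link of every nonempty
face vanishes below its dimension. -/
def IsBuchsbaum (K : Type*) [Field K] [LinearOrder V] (Δ : AbstractComplex V) : Prop :=
  Δ.IsPure ∧ ∀ G ∈ Δ.faces, G ≠ ∅ →
    ∀ i : ℤ, (Δ.link G).dimLT i → (Δ.link G).RHTriv K i

end AbstractComplex

/-- The expansion `F^α` of a finite vertex set. -/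
def expandSet {V : Type*} (α : V → ℕ) (F : Finset V) : Finset (Σ i, Fin (α i)) :=
  F.sigma fun _ => Finset.univ

namespace AbstractComplex

/-- The expansion `Δ^α` of a simplicial complex: the complex generated by the
expansions of the facets of `Δ`. -/
def expand {V : Type*} (Δ : AbstractComplex V) (α : V → ℕ) :
    AbstractComplex (Σ i, Fin (α i)) where
  faces := {σ | ∃ F, Δ.IsFacet F ∧ σ ⊆ expandSet α F}
  down_closed := fun ⟨F, hF, hsub⟩ hts => ⟨F, hF, hts.trans hsub⟩

end AbstractComplex

/-- A linear order on the expanded vertex set (lexicographic). -/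
noncomputable instance sigmaFinLinearOrder {V : Type*} [LinearOrder V] {α : V → ℕ} :
    LinearOrder (Σ i, Fin (α i)) :=
  LinearOrder.lift' (toLex : (Σ i, Fin (α i)) → Σₗ i, Fin (α i)) toLex.injective

/-!
Let `ι : Δ → Δ^α` send `x` to `(x, 0)` and `π : Δ^α → Δ` forget the copy index. Both vertex maps
are simplicial and monotone for the lexicographic order, so they induce chain maps of ordered
reduced chains (`π` sends a face on which it is not injective to `0`; the two faces `σ \ {a}`,
`σ \ {b}` with `π a = π b` then cancel), and `π ∘ ι = id`. Hence the reduced homology of a complex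
is a retract of that of its expansion. Since `link_{Δ^α}(F^α) = (link_Δ F)^α` and expansion does
not lower dimensions, Reisner's criterion passes from `Δ^α` to `Δ`.
-/

namespace Finset

section

variable {V W : Type*} [DecidableEq W] {f : W → V} {s : Finset W} {a b : W}

lemma image_erase_eq_image_erase_of_map_eq [DecidableEq V] (ha : a ∈ s) (hb : b ∈ s)
    (hab : f a = f b) : (s.erase a).image f = (s.erase b).image f := by
  ext u
  simp only [mem_image, mem_erase]
  constructor
  · rintro ⟨z, ⟨hza, hz⟩, rfl⟩
    by_cases hzb : z = b
    · exact ⟨a, ⟨fun h => hza (hzb.trans h.symm), ha⟩, hzb ▸ hab⟩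
    · exact ⟨z, ⟨hzb, hz⟩, rfl⟩
  · rintro ⟨z, ⟨hzb, hz⟩, rfl⟩
    by_cases hza : z = a
    · exact ⟨b, ⟨fun h => hzb (hza.trans h.symm), hb⟩, hza ▸ hab.symm⟩
    · exact ⟨z, ⟨hza, hz⟩, rfl⟩

lemma image_erase_of_injOn [DecidableEq V] (h : Set.InjOn f s) (ha : a ∈ s) :
    (s.erase a).image f = (s.image f).erase (f a) := by
  ext u
  simp only [mem_image, mem_erase]
  constructor
  · rintro ⟨z, ⟨hza, hz⟩, rfl⟩
    exact ⟨fun hfz => hza (h hz ha hfz), z, hz, rfl⟩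
  · rintro ⟨hne, z, hz, rfl⟩
    exact ⟨z, ⟨fun hza => hne (hza ▸ rfl), hz⟩, rfl⟩

lemma injOn_erase_of_map_eq [DecidableEq V] (h : Set.InjOn f (s.erase a)) (ha : a ∈ s)
    (hb : b ∈ s) (hab : f a = f b) : Set.InjOn f (s.erase b) := by
  rw [← card_image_iff, ← image_erase_eq_image_erase_of_map_eq ha hb hab,
    card_image_of_injOn h, card_erase_of_mem ha, card_erase_of_mem hb]

lemma exists_ne_map_eq_of_injOn_erase (hs : ¬ Set.InjOn f s) (h : Set.InjOn f (s.erase a)) :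
    ∃ b ∈ s, b ≠ a ∧ f b = f a := by
  obtain ⟨u, hu, v, hv, huv, hne⟩ : ∃ u ∈ s, ∃ v ∈ s, f u = f v ∧ u ≠ v := by
    simpa [Set.InjOn] using hs
  by_cases hua : u = a
  · exact ⟨v, hv, fun h => hne (hua.trans h.symm), hua ▸ huv.symm⟩
  by_cases hva : v = a
  · exact ⟨u, hu, hua, hva ▸ huv⟩
  exact absurd (h (by simp [hua, hu]) (by simp [hva, hv]) huv) hne

end

section

variable {V W : Type*} [LinearOrder V] [LinearOrder W] {f : W → V} {s : Finset W}

lemma card_filter_lt_image_of_injOn (hf : Monotone f) (hs : Set.InjOn f s) {x : W}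
    (hx : x ∈ s) : #{u ∈ s.image f | u < f x} = #{y ∈ s | y < x} := by
  have himage : {u ∈ s.image f | u < f x} = {y ∈ s | y < x}.image f := by
    ext u
    simp only [mem_filter, mem_image]
    constructor
    · rintro ⟨⟨y, hy, rfl⟩, hlt⟩
      exact ⟨y, ⟨hy, hf.reflect_lt hlt⟩, rfl⟩
    · rintro ⟨y, ⟨hy, hlt⟩, rfl⟩
      exact ⟨⟨y, hy, rfl⟩, (hf hlt.le).lt_of_ne fun h => hlt.ne (hs hy hx h)⟩
  rw [himage, card_image_of_injOn (hs.mono (filter_subset _ _))]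

lemma card_filter_lt_eq_succ_of_map_eq {a b : W} (hf : Monotone f)
    (hs : Set.InjOn f (s.erase a)) (ha : a ∈ s) (hb : b ∈ s) (hab : a < b) (hfab : f a = f b) :
    #{y ∈ s | y < b} = #{y ∈ s | y < a} + 1 := by
  have hbetween : {y ∈ s | y < b} = insert a {y ∈ s | y < a} := by
    ext y
    simp only [mem_filter, mem_insert]
    constructor
    · rintro ⟨hy, hyb⟩
      refine or_iff_not_imp_left.2 fun hya => ⟨hy, lt_of_not_ge fun hay => hyb.ne ?_⟩
      -- `f` is constant on `[a, b]`, so `y` and `b` collide outside of `a`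
      refine hs (by simp [hya, hy]) (by simp [hab.ne', hb]) ?_
      exact le_antisymm (hf hyb.le) (hfab ▸ hf hay)
    · rintro (rfl | ⟨hy, hya⟩)
      exacts [⟨ha, hab⟩, ⟨hy, hya.trans hab⟩]
  rw [hbetween, card_insert_of_notMem (by simp)]

end

end Finset

namespace AbstractComplex

variable {K : Type*} [Field K] {V W : Type*}

def Face.erase {Δ : AbstractComplex W} [DecidableEq W] {q : ℕ} (σ : Δ.Face (q + 1)) {x : W}
    (hx : x ∈ σ.1) : Δ.Face q :=
  ⟨σ.1.erase x, Δ.down_closed σ.2.1 (erase_subset _ _), by rw [card_erase_of_mem hx, σ.2.2]; rfl⟩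

def Face.image [DecidableEq V] {Γ : AbstractComplex W} {Λ : AbstractComplex V} {f : W → V}
    (hf : Set.MapsTo (image f) Γ.faces Λ.faces) {q : ℕ} (σ : Γ.Face q) (hσ : Set.InjOn f σ.1) :
    Λ.Face q :=
  ⟨σ.1.image f, hf σ.2.1, by rw [card_image_of_injOn hσ, σ.2.2]⟩

lemma boundary_single [LinearOrder W] (Δ : AbstractComplex W) {q : ℕ} (σ : Δ.Face (q + 1)) :
    Δ.boundary K q (Finsupp.single σ 1) =
      ∑ x ∈ σ.1.attach, (-1 : K) ^ #{y ∈ σ.1 | y < x.1} • Finsupp.single (σ.erase x.2) 1 := by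
  simp only [boundary, Finsupp.lsum_single, LinearMap.toSpanSingleton_apply, one_smul]
  rfl

section ChainMap

variable [DecidableEq V] {Γ : AbstractComplex W} {Λ : AbstractComplex V}
  {f : W → V} (hf : Set.MapsTo (image f) Γ.faces Λ.faces)

variable (K) in
open Classical in
noncomputable def chainMap (q : ℕ) : (Γ.Face q →₀ K) →ₗ[K] (Λ.Face q →₀ K) :=
  Finsupp.lsum K fun σ => LinearMap.toSpanSingleton K _
    (if hσ : Set.InjOn f σ.1 then Finsupp.single (σ.image hf hσ) 1 else 0)

lemma chainMap_single_of_injOn {q : ℕ} {σ : Γ.Face q} (hσ : Set.InjOn f σ.1) :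
    chainMap K hf q (Finsupp.single σ 1) = Finsupp.single (σ.image hf hσ) 1 := by
  simp [chainMap, hσ]

lemma chainMap_single_of_not_injOn {q : ℕ} {σ : Γ.Face q} (hσ : ¬ Set.InjOn f σ.1) :
    chainMap K hf q (Finsupp.single σ 1) = 0 := by
  simp [chainMap, hσ]

lemma chainMap_comp_chainMap_of_leftInverse [DecidableEq W] {g : V → W}
    (hg : Set.MapsTo (image g) Λ.faces Γ.faces) (hfg : Function.LeftInverse f g) (q : ℕ) :
    (chainMap K hf q).comp (chainMap K hg q) = LinearMap.id := by
  refine Finsupp.lhom_ext' fun σ => LinearMap.ext_ring ?_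
  have hgσ : Set.InjOn g σ.1 := hfg.injective.injOn
  have hfgσ : Set.InjOn f (σ.1.image g) := by
    rw [coe_image]
    refine (Function.Injective.injOn_range ?_).mono (Set.image_subset_range _ _)
    rw [hfg.comp_eq_id]
    exact Function.injective_id
  have hσ : (σ.image hg hgσ).image hf hfgσ = σ :=
    Subtype.ext <| by simp [Face.image, image_image, hfg.comp_eq_id]
  simp only [LinearMap.comp_apply, Finsupp.lsingle_apply, LinearMap.id_apply,
    chainMap_single_of_injOn hg hgσ]
  rw [chainMap_single_of_injOn hf hfgσ, hσ]

end ChainMap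

section Boundary

variable [LinearOrder V] [LinearOrder W] {Γ : AbstractComplex W} {Λ : AbstractComplex V}
  {f : W → V} (hf : Set.MapsTo (image f) Γ.faces Λ.faces)

lemma boundary_chainMap_single_of_injOn (hmono : Monotone f) {q : ℕ} {σ : Γ.Face (q + 1)}
    (hσ : Set.InjOn f σ.1) :
    Λ.boundary K q (chainMap K hf (q + 1) (Finsupp.single σ 1)) =
      chainMap K hf q (Γ.boundary K q (Finsupp.single σ 1)) := by
  have herase (x : W) : Set.InjOn f (σ.1.erase x) := hσ.mono (erase_subset _ _)
  rw [chainMap_single_of_injOn hf hσ, boundary_single, boundary_single, map_sum]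
  simp only [map_smul]
  refine (sum_bij (fun x _ => ⟨f x.1, mem_image_of_mem f x.2⟩) (fun _ _ => mem_attach _ _)
    (fun x _ y _ h => Subtype.ext (hσ x.2 y.2 (congrArg Subtype.val h))) ?_ ?_).symm
  · rintro ⟨u, hu⟩ -
    obtain ⟨x, hx, rfl⟩ := mem_image.1 hu
    exact ⟨⟨x, hx⟩, mem_attach _ _, rfl⟩
  · rintro ⟨x, hx⟩ -
    have hface : (σ.erase hx).image hf (herase x) =
        (σ.image hf hσ).erase (mem_image_of_mem f hx) :=
      Subtype.ext (image_erase_of_injOn hσ hx)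
    rw [chainMap_single_of_injOn hf (σ := σ.erase hx) (herase x), hface]
    simp only [Face.image]
    rw [card_filter_lt_image_of_injOn hmono hσ hx]

lemma chainMap_boundary_single_of_not_injOn (hmono : Monotone f) {q : ℕ} {σ : Γ.Face (q + 1)}
    (hσ : ¬ Set.InjOn f σ.1) : chainMap K hf q (Γ.boundary K q (Finsupp.single σ 1)) = 0 := by
  rw [boundary_single, map_sum]
  simp only [map_smul]
  by_cases hex : ∃ a ∈ σ.1, Set.InjOn f (σ.1.erase a)
  swap
  · push Not at hex
    refine sum_eq_zero fun x _ => ?_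
    rw [chainMap_single_of_not_injOn hf (σ := σ.erase x.2) (hex x.1 x.2), smul_zero]
  -- the faces `σ \ {a}` on which `f` is injective come in a pair `a < b` with `f a = f b`,
  -- and their terms cancel
  obtain ⟨a, ha, haInj⟩ := hex
  obtain ⟨b, hb, hba, hfba⟩ := exists_ne_map_eq_of_injOn_erase hσ haInj
  have hbInj := injOn_erase_of_map_eq haInj ha hb hfba.symm
  wlog hab : a < b generalizing a b
  · exact this b hb hbInj a ha hba.symm hfba.symm haInj ((Ne.lt_or_gt hba).resolve_right hab)
  have hrest : ∀ c ∈ σ.1.attach, c ≠ ⟨a, ha⟩ ∧ c ≠ ⟨b, hb⟩ →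
      (-1 : K) ^ #{y ∈ σ.1 | y < c.1} • chainMap K hf q (Finsupp.single (σ.erase c.2) 1) = 0 := by
    rintro ⟨c, hc⟩ - ⟨hca, hcb⟩
    have hcInj : ¬ Set.InjOn f (σ.1.erase c) := fun h =>
      hba (h (by simpa [hb] using fun e => hcb (Subtype.ext e.symm))
        (by simpa [ha] using fun e => hca (Subtype.ext e.symm)) hfba)
    rw [chainMap_single_of_not_injOn hf (σ := σ.erase hc) hcInj, smul_zero]
  rw [sum_eq_add_of_mem ⟨a, ha⟩ ⟨b, hb⟩ (mem_attach _ _) (mem_attach _ _)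
    (fun h => hba (congrArg Subtype.val h).symm) hrest,
    chainMap_single_of_injOn hf (σ := σ.erase ha) haInj,
    chainMap_single_of_injOn hf (σ := σ.erase hb) hbInj]
  have hsame : (σ.erase hb).image hf hbInj = (σ.erase ha).image hf haInj :=
    Subtype.ext (image_erase_eq_image_erase_of_map_eq hb ha hfba)
  rw [hsame, card_filter_lt_eq_succ_of_map_eq hmono haInj ha hb hab hfba.symm, pow_succ,
    mul_neg_one, neg_smul, add_neg_cancel]

lemma boundary_comp_chainMap (hmono : Monotone f) (q : ℕ) :
    (Λ.boundary K q).comp (chainMap K hf (q + 1)) = (chainMap K hf q).comp (Γ.boundary K q) := by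
  refine Finsupp.lhom_ext' fun σ => LinearMap.ext_ring ?_
  simp only [LinearMap.comp_apply, Finsupp.lsingle_apply]
  by_cases hσ : Set.InjOn f σ.1
  · exact boundary_chainMap_single_of_injOn hf hmono hσ
  · rw [chainMap_single_of_not_injOn hf hσ, map_zero,
      chainMap_boundary_single_of_not_injOn hf hmono hσ]

end Boundary

section Retraction

variable [LinearOrder V] [LinearOrder W] {Γ : AbstractComplex W} {Λ : AbstractComplex V}
  {f : W → V} {g : V → W}

lemma mem_range_boundary_of_retraction (hf : Set.MapsTo (image f) Γ.faces Λ.faces)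
    (hg : Set.MapsTo (image g) Λ.faces Γ.faces) (hfmono : Monotone f)
    (hfg : Function.LeftInverse f g) {q : ℕ} {c : Λ.Face q →₀ K}
    (hc : chainMap K hg q c ∈ LinearMap.range (Γ.boundary K q)) :
    c ∈ LinearMap.range (Λ.boundary K q) := by
  obtain ⟨d, hd⟩ := hc
  refine ⟨chainMap K hf (q + 1) d, ?_⟩
  rw [← LinearMap.comp_apply, boundary_comp_chainMap hf hfmono, LinearMap.comp_apply, hd,
    ← LinearMap.comp_apply, chainMap_comp_chainMap_of_leftInverse hf hg hfg, LinearMap.id_apply]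

lemma rhTriv_of_retraction (hf : Set.MapsTo (image f) Γ.faces Λ.faces)
    (hg : Set.MapsTo (image g) Λ.faces Γ.faces) (hfmono : Monotone f) (hgmono : Monotone g)
    (hfg : Function.LeftInverse f g) {i : ℤ} (hΓ : Γ.RHTriv K i) : Λ.RHTriv K i := by
  match i, hΓ with
  | Int.ofNat q, hΓ =>
    intro c hc
    refine mem_range_boundary_of_retraction hf hg hfmono hfg (hΓ ?_)
    rw [LinearMap.mem_ker, ← LinearMap.comp_apply, boundary_comp_chainMap hg hgmono,
      LinearMap.comp_apply, LinearMap.mem_ker.1 hc, map_zero]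
  | Int.negSucc 0, hΓ =>
    exact fun c _ => mem_range_boundary_of_retraction hf hg hfmono hfg (hΓ trivial)
  | Int.negSucc (_ + 1), _ => trivial

end Retraction

end AbstractComplex

section Expansion

-- The order and decidable equality on the expanded vertex set must be those of
-- `sigmaFinLinearOrder`, which `IsCM` uses, not the componentwise ones of `Sigma`.
attribute [-instance] Sigma.instLT_mathlib Sigma.instLE_mathlib Sigma.preorder
  Sigma.instPartialOrder Sigma.instDecidableEqSigma instDecidableEqSigma

attribute [ext] AbstractComplex

variable {V : Type*} {α : V → ℕ}

def zeroSection (hα : ∀ i, 1 ≤ α i) (x : V) : Σ i, Fin (α i) := ⟨x, ⟨0, hα x⟩⟩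

lemma leftInverse_fst_zeroSection (hα : ∀ i, 1 ≤ α i) :
    Function.LeftInverse Sigma.fst (zeroSection hα) := fun _ => rfl

lemma mem_expandSet {x : Σ i, Fin (α i)} {F : Finset V} : x ∈ expandSet α F ↔ x.1 ∈ F := by
  simp [expandSet]

lemma subset_expandSet_image_fst [DecidableEq V] (σ : Finset (Σ i, Fin (α i))) :
    σ ⊆ expandSet α (σ.image Sigma.fst) :=
  fun _ hx => mem_expandSet.2 (mem_image_of_mem _ hx)

lemma image_fst_expandSet [DecidableEq V] (hα : ∀ i, 1 ≤ α i) (F : Finset V) :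
    (expandSet α F).image Sigma.fst = F := by
  ext x
  simp only [mem_image, mem_expandSet]
  exact ⟨fun ⟨y, hy, hyx⟩ => hyx ▸ hy, fun hx => ⟨zeroSection hα x, hx, rfl⟩⟩

lemma inter_expandSet_eq_empty_iff [DecidableEq V] [DecidableEq (Σ i, Fin (α i))]
    {σ : Finset (Σ i, Fin (α i))} {F : Finset V} :
    σ ∩ expandSet α F = ∅ ↔ σ.image Sigma.fst ∩ F = ∅ := by
  simp only [eq_empty_iff_forall_notMem, mem_inter, mem_expandSet, mem_image, not_and]
  exact ⟨fun h _ ⟨x, hx, hxv⟩ => hxv ▸ h x hx, fun h x hx => h x.1 ⟨x, hx, rfl⟩⟩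

lemma monotone_sigma_fst [LinearOrder V] : Monotone (Sigma.fst : (Σ i, Fin (α i)) → V) :=
  fun _ _ hxy => by
    rcases Sigma.Lex.le_def.1 hxy with hlt | ⟨heq, -⟩
    exacts [hlt.le, heq.le]

lemma monotone_zeroSection [LinearOrder V] (hα : ∀ i, 1 ≤ α i) : Monotone (zeroSection hα) :=
  fun _ _ hxy => by
    refine Sigma.Lex.le_def.2 ?_
    rcases hxy.lt_or_eq with hlt | rfl
    exacts [Or.inl hlt, Or.inr ⟨rfl, le_rfl⟩]

namespace AbstractComplex

lemma exists_isFacet_superset [Finite V] (Δ : AbstractComplex V) {s : Finset V}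
    (hs : s ∈ Δ.faces) : ∃ F, Δ.IsFacet F ∧ s ⊆ F := by
  obtain ⟨F, hsF, hF⟩ := Finite.exists_le_maximal (p := (· ∈ Δ.faces)) hs
  exact ⟨F, ⟨hF.1, fun t ht hFt => le_antisymm hFt (hF.2 ht hFt)⟩, hsF⟩

lemma image_fst_mem_faces_of_mem_expand [DecidableEq V] {Δ : AbstractComplex V}
    {σ : Finset (Σ i, Fin (α i))} (hσ : σ ∈ (Δ.expand α).faces) :
    σ.image Sigma.fst ∈ Δ.faces := by
  obtain ⟨F, hF, hσF⟩ := hσ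
  refine Δ.down_closed hF.1 fun x hx => ?_
  obtain ⟨y, hy, rfl⟩ := mem_image.1 hx
  exact mem_expandSet.1 (hσF hy)

lemma mem_expand_faces_iff [Finite V] [DecidableEq V] {Δ : AbstractComplex V}
    {σ : Finset (Σ i, Fin (α i))} :
    σ ∈ (Δ.expand α).faces ↔ σ.image Sigma.fst ∈ Δ.faces := by
  refine ⟨image_fst_mem_faces_of_mem_expand, fun hσ => ?_⟩
  obtain ⟨F, hF, hσF⟩ := Δ.exists_isFacet_superset hσ
  exact ⟨F, hF, (subset_expandSet_image_fst σ).trans fun x hx =>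
    mem_expandSet.2 (hσF (mem_expandSet.1 hx))⟩

variable [LinearOrder V]

lemma mapsTo_image_zeroSection [Finite V] (hα : ∀ i, 1 ≤ α i) (Δ : AbstractComplex V) :
    Set.MapsTo (image (zeroSection hα)) Δ.faces (Δ.expand α).faces := fun s hs => by
  rwa [mem_expand_faces_iff, image_image,
    (leftInverse_fst_zeroSection hα).comp_eq_id, image_id]

lemma link_expandSet [Finite V] (hα : ∀ i, 1 ≤ α i) (Δ : AbstractComplex V)
    (F : Finset V) : (Δ.expand α).link (expandSet α F) = (Δ.link F).expand α := by
  ext σ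
  simp only [link, Set.mem_ofPred_eq, mem_expand_faces_iff, image_union,
    image_fst_expandSet hα, inter_expandSet_eq_empty_iff]

lemma dimLT_expand [Finite V] (hα : ∀ i, 1 ≤ α i) {Δ : AbstractComplex V} {i : ℤ}
    (h : Δ.dimLT i) : (Δ.expand α).dimLT i := by
  obtain ⟨s, hs, hcard⟩ := h
  refine ⟨s.image (zeroSection hα), mapsTo_image_zeroSection hα Δ hs, ?_⟩
  rwa [card_image_of_injective _ (leftInverse_fst_zeroSection hα).injective]

lemma rhTriv_of_rhTriv_expand (K : Type*) [Field K] [Finite V] (hα : ∀ i, 1 ≤ α i)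
    {Δ : AbstractComplex V} {i : ℤ} (h : (Δ.expand α).RHTriv K i) : Δ.RHTriv K i :=
  rhTriv_of_retraction (fun _ => image_fst_mem_faces_of_mem_expand)
    (mapsTo_image_zeroSection hα Δ) monotone_sigma_fst (monotone_zeroSection hα)
    (leftInverse_fst_zeroSection hα) h

end AbstractComplex

end Expansion

/-- if `Δ^α` is Cohen–Macaulay over `K`, then so is `Δ`. -/
theorem cm_of_expand_cm (K : Type*) [Field K] {V : Type*} [Fintype V] [LinearOrder V]
    (Δ : AbstractComplex V) (α : V → ℕ) (hα : ∀ i, 1 ≤ α i)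
    (h : AbstractComplex.IsCM K (Δ.expand α)) :
    AbstractComplex.IsCM K Δ := by
  intro F hF i hdim
  have hFα : expandSet α F ∈ (Δ.expand α).faces :=
    AbstractComplex.mem_expand_faces_iff.2 (by rwa [image_fst_expandSet hα])
  have hlink := AbstractComplex.link_expandSet hα Δ F
  have hΔα := h _ hFα i (hlink ▸ AbstractComplex.dimLT_expand hα hdim)
  exact AbstractComplex.rhTriv_of_rhTriv_expand K hα (hlink ▸ hΔα)
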